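/- arXiv:2601.20231 — 3 statements merged into one kernel-verified Lean document; each statement's English description precedes it below -/
import Mathlib

section
/- Active set containment: A ⊆ {x ∈ X : f(x) ≥ f* − 2Δ}, where Δ = sup_{x ∈ A} ρ(x) + (f* − ℓ) and ρ(x) = min_{1≤i≤N} (r_i + L·d(x, x_i)). That is, every point of the active set is 2Δ-near-optimal. -/
/-- Lipschitz UCB envelope `U(x) = min_i (μ_i + r_i + L·d(x, x_i))`. -/
noncomputable def lipUCB {X : Type*} [MetricSpace X] {N : ℕ}
    (L : ℝ) (xs : Fin N → X) (μ r : Fin N → ℝ) (x : X) : ℝ :=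
  ⨅ i, (μ i + r i + L * dist x (xs i))

/-- Slack quantity `ρ(x) = min_i (r_i + L·d(x, x_i))`. -/
noncomputable def lipSlack {X : Type*} [MetricSpace X] {N : ℕ}
    (L : ℝ) (xs : Fin N → X) (r : Fin N → ℝ) (x : X) : ℝ :=
  ⨅ i, (r i + L * dist x (xs i))

/-- Lower certificate `ℓ = max_i (μ_i − r_i)`. -/
noncomputable def lowerCert {N : ℕ} (μ r : Fin N → ℝ) : ℝ :=
  ⨆ i, (μ i - r i)

/-- Active set `A = {x : U(x) ≥ ℓ}`. -/
noncomputable def activeSet {X : Type*} [MetricSpace X] {N : ℕ}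
    (L : ℝ) (xs : Fin N → X) (μ r : Fin N → ℝ) : Set X :=
  {x : X | lowerCert μ r ≤ lipUCB L xs μ r x}

section

variable {X : Type*} [MetricSpace X] {N : ℕ} [Nonempty (Fin N)]

theorem lowerCert_le_of_abs_sub_le {μ r g : Fin N → ℝ} {c : ℝ}
    (hgood : ∀ i, |μ i - g i| ≤ r i) (hc : ∀ i, g i ≤ c) : lowerCert μ r ≤ c :=
  ciSup_le fun i => by linarith [(abs_le.mp (hgood i)).2, hc i]

/-- Since `μ i + r i ≤ f (xs i) + 2 r i ≤ f x + 2 (r i + L d(x, xs i))` for every `i`, the envelope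
overshoots `f` by at most twice the slack. -/
theorem lipUCB_le_add_two_mul_lipSlack {L : ℝ} {f : X → ℝ} (xs : Fin N → X) (μ r : Fin N → ℝ)
    (hf : ∀ x y, |f x - f y| ≤ L * dist x y) (hgood : ∀ i, |μ i - f (xs i)| ≤ r i) (x : X) :
    lipUCB L xs μ r x ≤ f x + 2 * lipSlack L xs r x := by
  suffices (lipUCB L xs μ r x - f x) / 2 ≤ lipSlack L xs r x by linarith
  refine le_ciInf fun i => ?_
  have hUi : lipUCB L xs μ r x ≤ μ i + r i + L * dist x (xs i) :=
    ciInf_le (Finite.bddBelow_range _) i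
  have hμ := (abs_le.mp (hgood i)).2
  have hfx := (abs_le.mp (hf (xs i) x)).2
  rw [dist_comm] at hfx
  linarith

end

theorem active_set_containment_general {X : Type*} [MetricSpace X]
    {L : ℝ} {f : X → ℝ}
    (hf : ∀ x y, |f x - f y| ≤ L * dist x y)
    {N : ℕ} (hN : 1 ≤ N) (xs : Fin N → X) (μ r : Fin N → ℝ)
    (hgood : ∀ i, |μ i - f (xs i)| ≤ r i)
    (xstar : X) (hopt : ∀ y : X, f y ≤ f xstar)
    (s : ℝ) (hs : IsLUB (lipSlack L xs r '' activeSet L xs μ r) s) :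
    activeSet L xs μ r ⊆
      {x : X | f xstar - 2 * (s + (f xstar - lowerCert μ r)) ≤ f x} := by
  intro x hx
  have : Nonempty (Fin N) := Fin.pos_iff_nonempty.mp hN
  have hℓ : lowerCert μ r ≤ f xstar := lowerCert_le_of_abs_sub_le hgood fun i => hopt (xs i)
  have hU := lipUCB_le_add_two_mul_lipSlack xs μ r hf hgood x
  have hρ : lipSlack L xs r x ≤ s := hs.1 ⟨x, hx, rfl⟩
  have hA : lowerCert μ r ≤ lipUCB L xs μ r x := hx
  show f xstar - 2 * (s + (f xstar - lowerCert μ r)) ≤ f x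
  linarith

/-- Active set containment: `A ⊆ {x : f(x) ≥ f* − 2Δ}` where
`Δ = sup_{x ∈ A} ρ(x) + (f* − ℓ)` (the supremum `s` of `ρ` over `A` is
assumed to exist, expressed via `IsLUB`). -/
theorem active_set_containment {X : Type*} [MetricSpace X]
    {L : ℝ} (hL : 0 ≤ L) {f : X → ℝ}
    (hf : ∀ x y, |f x - f y| ≤ L * dist x y)
    {N : ℕ} (hN : 1 ≤ N) (xs : Fin N → X) (μ r : Fin N → ℝ)
    (hr : ∀ i, 0 ≤ r i)
    (hgood : ∀ i, |μ i - f (xs i)| ≤ r i)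
    (xstar : X) (hopt : ∀ y : X, f y ≤ f xstar)
    (s : ℝ) (hs : IsLUB (lipSlack L xs r '' activeSet L xs μ r) s) :
    activeSet L xs μ r ⊆
      {x : X | f xstar - 2 * (s + (f xstar - lowerCert μ r)) ≤ f x} :=
  active_set_containment_general hf hN xs μ r hgood xstar hopt s hs
end

section
/- Shrinkage theorem: Vol(A) ≤ C·(2(β + L·η) + γ)^{d−α}, where β = max_{1≤i≤N} r_i, η = sup_{x ∈ A} min_{1≤i≤N} d(x, x_i) is the covering radius of the active set, and γ = f* − ℓ, provided 2(β + L·η) + γ > 0. -/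
open MeasureTheory

/-- The unit cube `[0,1]^d` in Euclidean space. -/
def unitCube (d : ℕ) : Set (EuclideanSpace ℝ (Fin d)) :=
  {x | ∀ i, x i ∈ Set.Icc (0 : ℝ) 1}

/-! A point `x` survives in the active set only if `ℓ ≤ U(x)`. Following the UCB term of the
sample `x_i` nearest to `x`, `U(x) ≤ μ_i + r_i + L d(x, x_i) ≤ f(x) + 2 (r_i + L d(x, x_i))`
on the good event, so `f(x) ≥ ℓ - 2(β + Lη) = f* - (2(β + Lη) + γ)`: the active set lies in a
superlevel set of `f`, whose volume the margin condition controls. -/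

section Envelope

variable {X : Type*} [MetricSpace X] {N : ℕ} {L : ℝ} {xs : Fin N → X} {μ r : Fin N → ℝ}

theorem lipUCB_le (x : X) (i : Fin N) : lipUCB L xs μ r x ≤ μ i + r i + L * dist x (xs i) :=
  ciInf_le (Set.finite_range _).bddBelow i

theorem lowerCert_le_of_le_lipUCB {f : X → ℝ} {x : X} (hU : lowerCert μ r ≤ lipUCB L xs μ r x)
    (i : Fin N) (hgood : |μ i - f (xs i)| ≤ r i) (hf : |f (xs i) - f x| ≤ L * dist (xs i) x) :
    lowerCert μ r ≤ f x + 2 * (r i + L * dist x (xs i)) := by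
  have hμ := (abs_le.mp hgood).2
  have hfx := (abs_le.mp hf).2
  rw [dist_comm] at hfx
  linarith [lipUCB_le (L := L) (xs := xs) (μ := μ) (r := r) x i]

theorem lowerCert_le_add_of_le_lipUCB [Nonempty (Fin N)] {s : Set X} {f : X → ℝ} (hL : 0 ≤ L)
    (hf : ∀ x ∈ s, ∀ y ∈ s, |f x - f y| ≤ L * dist x y) (hxs : ∀ i, xs i ∈ s)
    (hgood : ∀ i, |μ i - f (xs i)| ≤ r i) {β η : ℝ} (hβ : ∀ i, r i ≤ β) {x : X} (hx : x ∈ s)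
    (hη : ⨅ i, dist x (xs i) ≤ η) (hU : lowerCert μ r ≤ lipUCB L xs μ r x) :
    lowerCert μ r ≤ f x + 2 * (β + L * η) := by
  obtain ⟨i, hi⟩ := exists_eq_ciInf_of_finite (f := fun i => dist x (xs i))
  have hdist : dist x (xs i) ≤ η := hi ▸ hη
  calc lowerCert μ r ≤ f x + 2 * (r i + L * dist x (xs i)) :=
        lowerCert_le_of_le_lipUCB hU i (hgood i) (hf _ (hxs i) x hx)
    _ ≤ f x + 2 * (β + L * η) := by gcongr; exact hβ i

end Envelope

theorem active_set_shrinkage_general {d : ℕ}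
    {L : ℝ} (hL : 0 ≤ L) {f : EuclideanSpace ℝ (Fin d) → ℝ}
    (hf : ∀ x ∈ unitCube d, ∀ y ∈ unitCube d, |f x - f y| ≤ L * dist x y)
    {N : ℕ} (hN : 1 ≤ N) (xs : Fin N → EuclideanSpace ℝ (Fin d))
    (hxs : ∀ i, xs i ∈ unitCube d)
    (μ r : Fin N → ℝ)
    (hgood : ∀ i, |μ i - f (xs i)| ≤ r i)
    (xstar : EuclideanSpace ℝ (Fin d))
    (C α : ℝ)
    (hmargin : ∀ ε : ℝ, 0 < ε →
      volume {x | x ∈ unitCube d ∧ f xstar - ε ≤ f x}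
        ≤ ENNReal.ofReal (C * ε ^ ((d : ℝ) - α)))
    -- the active set `A = {x ∈ [0,1]^d : U(x) ≥ ℓ}`
    (A : Set (EuclideanSpace ℝ (Fin d)))
    (hA : A = {x | x ∈ unitCube d ∧ lowerCert μ r ≤ lipUCB L xs μ r x})
    -- `β = max_i r_i`
    (β : ℝ) (hβ : β = ⨆ i, r i)
    -- `η = sup_{x ∈ A} min_i d(x, x_i)` (covering radius of the active set)
    (η : ℝ) (hη : IsLUB ((fun x => ⨅ i, dist x (xs i)) '' A) η)
    -- `γ = f* − ℓ`
    (γ : ℝ) (hγ : γ = f xstar - lowerCert μ r)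
    (hpos : 0 < 2 * (β + L * η) + γ) :
    volume A ≤ ENNReal.ofReal (C * (2 * (β + L * η) + γ) ^ ((d : ℝ) - α)) := by
  have : Nonempty (Fin N) := ⟨⟨0, hN⟩⟩
  have hrβ : ∀ i, r i ≤ β := fun i => hβ ▸ le_ciSup (Set.finite_range r).bddAbove i
  have hsub : A ⊆ {x | x ∈ unitCube d ∧ f xstar - (2 * (β + L * η) + γ) ≤ f x} := by
    intro x hxA
    have hη_x : ⨅ i, dist x (xs i) ≤ η := hη.1 ⟨x, hxA, rfl⟩
    rw [hA] at hxA
    obtain ⟨hx, hU⟩ := hxA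
    refine ⟨hx, ?_⟩
    linarith [lowerCert_le_add_of_le_lipUCB hL hf hxs hgood hrβ hx hη_x hU]
  exact (measure_mono hsub).trans (hmargin _ hpos)

/-- Shrinkage theorem: under the margin condition with near-optimality
dimension `α`, the volume of the active set is at most
`C·(2(β + Lη) + γ)^(d−α)`, where `β = max_i r_i`, `η` is the covering radius
of the active set, and `γ = f* − ℓ`. -/
theorem active_set_shrinkage {d : ℕ}
    {L : ℝ} (hL : 0 ≤ L) {f : EuclideanSpace ℝ (Fin d) → ℝ}
    (hf : ∀ x ∈ unitCube d, ∀ y ∈ unitCube d, |f x - f y| ≤ L * dist x y)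
    {N : ℕ} (hN : 1 ≤ N) (xs : Fin N → EuclideanSpace ℝ (Fin d))
    (hxs : ∀ i, xs i ∈ unitCube d)
    (μ r : Fin N → ℝ) (hr : ∀ i, 0 ≤ r i)
    (hgood : ∀ i, |μ i - f (xs i)| ≤ r i)
    (xstar : EuclideanSpace ℝ (Fin d)) (hxstar : xstar ∈ unitCube d)
    (hopt : ∀ y ∈ unitCube d, f y ≤ f xstar)
    (C α : ℝ) (hC : 0 < C) (hα0 : 0 ≤ α) (hαd : α ≤ d)
    (hmargin : ∀ ε : ℝ, 0 < ε →
      volume {x | x ∈ unitCube d ∧ f xstar - ε ≤ f x}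
        ≤ ENNReal.ofReal (C * ε ^ ((d : ℝ) - α)))
    -- the active set `A = {x ∈ [0,1]^d : U(x) ≥ ℓ}`
    (A : Set (EuclideanSpace ℝ (Fin d)))
    (hA : A = {x | x ∈ unitCube d ∧ lowerCert μ r ≤ lipUCB L xs μ r x})
    -- `β = max_i r_i`
    (β : ℝ) (hβ : β = ⨆ i, r i)
    -- `η = sup_{x ∈ A} min_i d(x, x_i)` (covering radius of the active set)
    (η : ℝ) (hη : IsLUB ((fun x => ⨅ i, dist x (xs i)) '' A) η)
    -- `γ = f* − ℓ`
    (γ : ℝ) (hγ : γ = f xstar - lowerCert μ r)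
    (hpos : 0 < 2 * (β + L * η) + γ) :
    volume A ≤ ENNReal.ofReal (C * (2 * (β + L * η) + γ) ^ ((d : ℝ) - α)) :=
  active_set_shrinkage_general hL hf hN xs hxs μ r hgood xstar C α hmargin A hA β hβ η hη γ hγ hpos
end

section
/- Gap bound: the optimality gap of the lower certificate satisfies f* − ℓ ≤ 2β + L·η, where β = max_{1≤i≤N} r_i and η = sup_{x ∈ A} min_{1≤i≤N} d(x, x_i) is the covering radius of the active set. -/
section GoodEvent

variable {X : Type*} {L : ℝ} {f : X → ℝ} {N : ℕ} {xs : Fin N → X} {μ r : Fin N → ℝ}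

lemma lowerCert_le [Nonempty (Fin N)] (hgood : ∀ i, |μ i - f (xs i)| ≤ r i) {y : X}
    (hy : ∀ i, f (xs i) ≤ f y) : lowerCert μ r ≤ f y :=
  ciSup_le fun i => by
    have hμ := (abs_le.mp (hgood i)).2
    linarith [hy i]

variable [MetricSpace X]

lemma le_lipUCB [Nonempty (Fin N)] (hf : ∀ x y, |f x - f y| ≤ L * dist x y)
    (hgood : ∀ i, |μ i - f (xs i)| ≤ r i) (x : X) : f x ≤ lipUCB L xs μ r x :=
  le_ciInf fun i => by
    have hlip := le_of_abs_le (hf x (xs i))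
    have hμ := (abs_le.mp (hgood i)).1
    linarith

lemma mem_activeSet_of_forall_le [Nonempty (Fin N)] (hf : ∀ x y, |f x - f y| ≤ L * dist x y)
    (hgood : ∀ i, |μ i - f (xs i)| ≤ r i) {xstar : X} (hopt : ∀ y, f y ≤ f xstar) :
    xstar ∈ activeSet L xs μ r :=
  (lowerCert_le hgood fun i => hopt (xs i)).trans (le_lipUCB hf hgood xstar)

lemma sub_lowerCert_le (hf : ∀ x y, |f x - f y| ≤ L * dist x y)
    (hgood : ∀ i, |μ i - f (xs i)| ≤ r i) (x : X) (i : Fin N) :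
    f x - lowerCert μ r ≤ 2 * r i + L * dist x (xs i) := by
  have hcert : μ i - r i ≤ lowerCert μ r :=
    le_ciSup (f := fun i => μ i - r i) (Set.finite_range _).bddAbove i
  have hlip := le_of_abs_le (hf x (xs i))
  have hμ := (abs_le.mp (hgood i)).1
  linarith

end GoodEvent

theorem lower_cert_gap_bound_general {X : Type*} [MetricSpace X]
    {L : ℝ} (hL : 0 ≤ L) {f : X → ℝ}
    (hf : ∀ x y, |f x - f y| ≤ L * dist x y)
    {N : ℕ} (hN : 1 ≤ N) (xs : Fin N → X) (μ r : Fin N → ℝ)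
    (hgood : ∀ i, |μ i - f (xs i)| ≤ r i)
    (xstar : X) (hopt : ∀ y : X, f y ≤ f xstar)
    (β : ℝ) (hβ : β = ⨆ i, r i)
    (η : ℝ)
    (hη : IsLUB ((fun x => ⨅ i, dist x (xs i)) '' activeSet L xs μ r) η) :
    f xstar - lowerCert μ r ≤ 2 * β + L * η := by
  have : Nonempty (Fin N) := ⟨⟨0, hN⟩⟩
  obtain ⟨i, hi⟩ := exists_eq_ciInf_of_finite (f := fun i => dist xstar (xs i))
  have hdist : dist xstar (xs i) ≤ η :=
    hi ▸ hη.1 ⟨xstar, mem_activeSet_of_forall_le hf hgood hopt, rfl⟩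
  have hri : r i ≤ β := hβ ▸ le_ciSup (Set.finite_range r).bddAbove i
  calc f xstar - lowerCert μ r ≤ 2 * r i + L * dist xstar (xs i) :=
        sub_lowerCert_le hf hgood xstar i
    _ ≤ 2 * β + L * η := by gcongr

/-- Gap bound: the optimality gap of the lower certificate satisfies
`f* − ℓ ≤ 2β + Lη`, where `β = max_i r_i` and `η` is the covering radius
of the active set. -/
theorem lower_cert_gap_bound {X : Type*} [MetricSpace X]
    {L : ℝ} (hL : 0 ≤ L) {f : X → ℝ}
    (hf : ∀ x y, |f x - f y| ≤ L * dist x y)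
    {N : ℕ} (hN : 1 ≤ N) (xs : Fin N → X) (μ r : Fin N → ℝ)
    (hr : ∀ i, 0 ≤ r i)
    (hgood : ∀ i, |μ i - f (xs i)| ≤ r i)
    (xstar : X) (hopt : ∀ y : X, f y ≤ f xstar)
    (β : ℝ) (hβ : β = ⨆ i, r i)
    (η : ℝ)
    (hη : IsLUB ((fun x => ⨅ i, dist x (xs i)) '' activeSet L xs μ r) η) :
    f xstar - lowerCert μ r ≤ 2 * β + L * η :=
  lower_cert_gap_bound_general hL hf hN xs μ r hgood xstar hopt β hβ η hη
end
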